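/- The occluded estimator is unbiased: when the occlusion process {(X_t,S_t,Y_t)}_{t=1}^n is started in stationarity (X_1,S_1,Y_1) ∼ P_occ, E[μ̂_occ] = P(f). -/

import Mathlib

open MeasureTheory ProbabilityTheory Filter

noncomputable section

namespace OcclusionPaper

variable {X : Type*} [MeasurableSpace X]

/-- The mean `μ_i = P_i(f)` of `f` under `P_i`, i.e. `P` conditioned to the region `A i`. -/
def regionMean (P : Measure X) {R : ℕ} (A : Fin R → Set X) (f : X → ℝ) (i : Fin R) : ℝ :=
  ∫ x, f x ∂(P[|A i])

/-- The resolution `→Pf(x) = ∑ i, μ_i 1{x ∈ A i}`. -/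
def res (P : Measure X) {R : ℕ} (A : Fin R → Set X) (f : X → ℝ) : X → ℝ :=
  fun x => ∑ i, Set.indicator (A i) (fun _ => regionMean P A f i) x

/-- The orthogonal counterpart `←Pf = f − →Pf`. -/
def orth (P : Measure X) {R : ℕ} (A : Fin R → Set X) (f : X → ℝ) : X → ℝ :=
  fun x => f x - res P A f x

/-- Covariance of `g` and `h` under `P`. -/
def covP {Y : Type*} [MeasurableSpace Y] (P : Measure Y) (g h : Y → ℝ) : ℝ :=
  (∫ y, g y * h y ∂P) - (∫ y, g y ∂P) * (∫ y, h y ∂P)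

/-- Action of the `k`-th iterate of a (measure-valued) transition kernel on a function:
`K^k g`. -/
def kerIter {Y : Type*} [MeasurableSpace Y] (κ : Y → Measure Y) : ℕ → (Y → ℝ) → Y → ℝ
  | 0, g => g
  | (k + 1), g => fun y => ∫ z, kerIter κ k g z ∂(κ y)

/-- The joint law of the first `n` steps `(X_1, …, X_n)` of a Markov chain with initial
distribution `μ` and transition kernel `κ`. -/
def chainLawF {Y : Type*} [MeasurableSpace Y] (μ : Measure Y) (κ : Y → Measure Y) :
    (n : ℕ) → Measure (Fin n → Y)
  | 0 => Measure.dirac (fun i : Fin 0 => i.elim0)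
  | 1 => μ.map (fun x _ => x)
  | (n + 2) => (chainLawF μ κ (n + 1)).bind
      (fun xs => (κ (xs (Fin.last n))).map (fun z => Fin.snoc xs z))

/-- The distribution `μ K^t` of a Markov chain with kernel `κ` after `t` steps from `μ`. -/
def evolveF {Y : Type*} [MeasurableSpace Y] (κ : Y → Measure Y) (μ : Measure Y) : ℕ → Measure Y
  | 0 => μ
  | (t + 1) => (evolveF κ μ t).bind κ

/-- `N_i`: the number of times the finite trajectory `xs` visits region `A i`. -/
def Nreg {R n : ℕ} (A : Fin R → Set X) (xs : Fin n → X) (i : Fin R) : ℕ :=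
  ∑ t : Fin n, Set.indicator (A i) (fun _ => (1 : ℕ)) (xs t)

/-- The fully occluded (ideal) estimator
`μ̂_ideal = n⁻¹ ∑_{i=1}^R ∑_{j=1}^{N_i} f(Y_{ij})`, evaluated on an outcome consisting of the
chain trajectory together with, for each region, an array of draws from `P_i`. -/
def idealEst {R n : ℕ} (A : Fin R → Set X) (f : X → ℝ)
    (ω : (Fin n → X) × (Fin R → Fin n → X)) : ℝ :=
  (n : ℝ)⁻¹ * ∑ i : Fin R, ∑ j : Fin n, if (j : ℕ) < Nreg A ω.1 i then f (ω.2 i j) else 0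

/-- The joint law of the chain `(X_1,…,X_n)` together with, for each region `i`, an i.i.d.
array `(Y_{ij})_j` of draws from `P_i`, independent of the chain (hence in particular
conditionally independent of it given the visited regions). -/
def jointLaw (P : Measure X) {R : ℕ} (A : Fin R → Set X) (κ : X → Measure X) (n : ℕ) :
    Measure ((Fin n → X) × (Fin R → Fin n → X)) :=
  (chainLawF P κ n).prod (Measure.pi fun i => Measure.pi fun _ : Fin n => P[|A i])

/-- Bernoulli distribution on `Bool` with success probability `p` (`true` has mass `p`). -/
def bern (p : ℝ) : Measure Bool :=
  ENNReal.ofReal p • Measure.dirac true + ENNReal.ofReal (1 - p) • Measure.dirac false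

/-- The conditional law of the pair `(s, y)` given the current chain position `x`:
`s ~ Bernoulli(α(ρ x))` and `y ~ P_{ρ x}` independently. -/
def mark (P : Measure X) {R : ℕ} (A : Fin R → Set X) (ρ : X → Fin R) (α : Fin R → ℝ) (x : X) :
    Measure (Bool × X) :=
  (bern (α (ρ x))).prod (P[|A (ρ x)])

/-- The occlusion kernel `K_occ((x,s,y) → (dx',s',dy'))
 = K(x → dx')·(α(ρ x')1{s'=1} + (1−α(ρ x'))1{s'=0})·P_{ρ x'}(dy')`. -/
def Kocc (P : Measure X) {R : ℕ} (A : Fin R → Set X) (ρ : X → Fin R) (α : Fin R → ℝ)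
    (κ : X → Measure X) : X × Bool × X → Measure (X × Bool × X) :=
  fun z => (κ z.1).bind fun x' => (mark P A ρ α x').map fun sy => (x', sy.1, sy.2)

/-- The measure `P_occ(dx,s,dy) = P(dx)·(α(ρ x)1{s=1} + (1−α(ρ x))1{s=0})·P_{ρ x}(dy)`. -/
def Pocc (P : Measure X) {R : ℕ} (A : Fin R → Set X) (ρ : X → Fin R) (α : Fin R → ℝ) :
    Measure (X × Bool × X) :=
  P.bind fun x => (mark P A ρ α x).map fun sy => (x, sy.1, sy.2)

/-- `f_occ(x,s,y) = 1{s=0} f(x) + 1{s=1} f(y)`. -/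
def focc (f : X → ℝ) : X × Bool × X → ℝ :=
  fun z => if z.2.1 then f z.2.2 else f z.1

/-- `f_α(x) = (1 − α(ρ x)) f(x) + α(ρ x) →Pf(x)`. -/
def falpha (P : Measure X) {R : ℕ} (A : Fin R → Set X) (ρ : X → Fin R) (α : Fin R → ℝ)
    (f : X → ℝ) : X → ℝ :=
  fun x => (1 - α (ρ x)) * f x + α (ρ x) * res P A f x

/-- `f_a(x) = (1 − α(ρ x)) f(x)`. -/
def fa {R : ℕ} (ρ : X → Fin R) (α : Fin R → ℝ) (f : X → ℝ) : X → ℝ :=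
  fun x => (1 - α (ρ x)) * f x

end OcclusionPaper

/-! The occlusion kernel moves the `X`-coordinate by `K` and then redraws the marks `(s, y)` from
their conditional law given the new position, and `P_occ` is `P` with the marks drawn the same way.
Hence `K`-invariance of `P` lifts to `K_occ`-invariance of `P_occ`, every `(X_t, S_t, Y_t)` of the
stationary chain has law `P_occ`, and it remains to show `P_occ(f_occ) = P(f)`. Integrating out the
marks leaves `α(ρ x) P_{ρ x}(f) + (1 - α(ρ x)) f(x)`, and on each region `X_i` the first term
integrates to `α_i ∫_{X_i} f dP`, because `P(X_i) P_i(f) = ∫_{X_i} f dP`. -/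

namespace OcclusionPaper

section StationaryChain

variable {Z : Type*} [MeasurableSpace Z]

lemma measurable_snoc_uncurry (n : ℕ) :
    Measurable fun p : (Fin (n + 1) → Z) × Z => (Fin.snoc p.1 p.2 : Fin (n + 2) → Z) := by
  refine measurable_pi_lambda _ fun i => ?_
  induction i using Fin.lastCases with
  | last => simp only [Fin.snoc_last]; fun_prop
  | cast j => simp only [Fin.snoc_castSucc]; fun_prop

def snocKernel (κ : Kernel Z Z) (n : ℕ) : Kernel (Fin (n + 1) → Z) (Fin (n + 2) → Z) :=
  (Kernel.id ×ₖ κ.comap (fun xs => xs (Fin.last n)) (measurable_pi_apply _)).map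
    fun p => Fin.snoc p.1 p.2

variable (κ : Kernel Z Z) [IsMarkovKernel κ]

lemma snocKernel_apply (n : ℕ) (xs : Fin (n + 1) → Z) :
    snocKernel κ n xs = (κ (xs (Fin.last n))).map (Fin.snoc xs) := by
  rw [snocKernel, Kernel.map_apply _ (measurable_snoc_uncurry n), Kernel.prod_apply,
    Kernel.id_apply, Kernel.comap_apply, Measure.dirac_prod,
    Measure.map_map (measurable_snoc_uncurry n) measurable_prodMk_left]
  rfl

lemma chainLawF_add_two (μ : Measure Z) (n : ℕ) :
    chainLawF μ κ (n + 2) = snocKernel κ n ∘ₘ chainLawF μ κ (n + 1) := by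
  rw [chainLawF]
  exact congrArg _ (funext fun xs => (snocKernel_apply κ n xs).symm)

lemma snocKernel_map_eval_castSucc (n : ℕ) (j : Fin (n + 1)) :
    (snocKernel κ n).map (fun ys => ys j.castSucc) =
      Kernel.deterministic (fun xs => xs j) (measurable_pi_apply j) := by
  have hcomp : (fun ys : Fin (n + 2) → Z => ys j.castSucc) ∘
      (fun p : (Fin (n + 1) → Z) × Z => (Fin.snoc p.1 p.2 : Fin (n + 2) → Z)) =
        (fun xs => xs j) ∘ Prod.fst := by
    funext p
    simp
  rw [snocKernel, ← Kernel.map_comp_right _ (measurable_snoc_uncurry n) (measurable_pi_apply _),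
    hcomp, Kernel.map_comp_right _ measurable_fst (measurable_pi_apply j), ← Kernel.fst_eq,
    Kernel.fst_prod, Kernel.id_map]

lemma snocKernel_map_eval_last (n : ℕ) :
    (snocKernel κ n).map (fun ys => ys (Fin.last (n + 1))) =
      κ.comap (fun xs => xs (Fin.last n)) (measurable_pi_apply _) := by
  have hcomp : (fun ys : Fin (n + 2) → Z => ys (Fin.last (n + 1))) ∘
      (fun p : (Fin (n + 1) → Z) × Z => (Fin.snoc p.1 p.2 : Fin (n + 2) → Z)) = Prod.snd := by
    funext p
    simp
  rw [snocKernel, ← Kernel.map_comp_right _ (measurable_snoc_uncurry n) (measurable_pi_apply _),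
    hcomp, ← Kernel.snd_eq, Kernel.snd_prod]

theorem chainLawF_map_eval {μ : Measure Z} (hμ : κ.Invariant μ) :
    ∀ n (t : Fin n), (chainLawF μ κ n).map (fun xs => xs t) = μ
  | 1, t => by
      rw [chainLawF, Measure.map_map (measurable_pi_apply t) (by fun_prop)]
      exact Measure.map_id
  | n + 2, t => by
      rw [chainLawF_add_two, Measure.map_comp _ _ (measurable_pi_apply t)]
      induction t using Fin.lastCases with
      | last =>
        rw [snocKernel_map_eval_last, ← Kernel.comp_deterministic_eq_comap, ← Measure.comp_assoc,
          Measure.deterministic_comp_eq_map, chainLawF_map_eval hμ (n + 1), hμ.def]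
      | cast j =>
        rw [snocKernel_map_eval_castSucc, Measure.deterministic_comp_eq_map,
          chainLawF_map_eval hμ (n + 1)]

theorem integral_chainLawF_average {μ : Measure Z} (hμ : κ.Invariant μ) {g : Z → ℝ}
    (hg : Integrable g μ) {n : ℕ} (hn : n ≠ 0) :
    ∫ zs, (n : ℝ)⁻¹ * ∑ t : Fin n, g (zs t) ∂chainLawF μ κ n = ∫ z, g z ∂μ := by
  have hmarg := chainLawF_map_eval κ hμ n
  have hg_map (t : Fin n) : Integrable g ((chainLawF μ κ n).map fun xs => xs t) := by
    rwa [hmarg t]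
  have hint (t : Fin n) : Integrable (fun zs => g (zs t)) (chainLawF μ κ n) :=
    (integrable_map_measure (hg_map t).aestronglyMeasurable
      (measurable_pi_apply t).aemeasurable).1 (hg_map t)
  have hterm (t : Fin n) : ∫ zs, g (zs t) ∂chainLawF μ κ n = ∫ z, g z ∂μ := by
    rw [← integral_map (measurable_pi_apply t).aemeasurable (hg_map t).aestronglyMeasurable,
      hmarg t]
  rw [integral_const_mul, integral_finsetSum _ fun t _ => hint t]
  simp [hterm, hn]

end StationaryChain

theorem _root_.ProbabilityTheory.Kernel.Invariant.comap_comp_of_map_eq_id {X Y : Type*}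
    [MeasurableSpace X] [MeasurableSpace Y] {μ : Measure X} {K : Kernel X X}
    (hK : K.Invariant μ) {η : Kernel X Y} {π : Y → X} (hπ : Measurable π)
    (hηπ : η.map π = Kernel.id) : ((η ∘ₖ K).comap π hπ).Invariant (η ∘ₘ μ) := by
  have hlift : (η ∘ₖ K).comap π hπ ∘ₖ η = η ∘ₖ K := by
    rw [← Kernel.comp_deterministic_eq_comap, Kernel.comp_assoc, Kernel.deterministic_comp_eq_map,
      hηπ, Kernel.comp_id]
  rw [Kernel.Invariant, Measure.comp_assoc, hlift, ← Measure.comp_assoc, hK.def]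

section Bernoulli

lemma isProbabilityMeasure_bern {p : ℝ} (h0 : 0 ≤ p) (h1 : p ≤ 1) :
    IsProbabilityMeasure (bern p) :=
  ⟨by simp [bern, ← ENNReal.ofReal_add h0 (sub_nonneg.2 h1)]⟩

variable {Y : Type*} [MeasurableSpace Y]

lemma bern_prod (p : ℝ) (ν : Measure Y) [SFinite ν] : (bern p).prod ν =
    ENNReal.ofReal p • ν.map (Prod.mk true) + ENNReal.ofReal (1 - p) • ν.map (Prod.mk false) := by
  rw [bern, Measure.add_prod, Measure.prod_smul_left, Measure.prod_smul_left, Measure.dirac_prod,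
    Measure.dirac_prod]

variable {p : ℝ} {ν : Measure Y} {g : Bool × Y → ℝ}

lemma integrable_map_prodMk (b : Bool) (h : Integrable (fun y => g (b, y)) ν) (c : ℝ) :
    Integrable g (ENNReal.ofReal c • ν.map (Prod.mk b)) :=
  ((measurableEmbedding_prodMk_left b).integrable_map_iff.2 h).smul_measure ENNReal.ofReal_ne_top

lemma integrable_bern_prod [SFinite ν] (h1 : Integrable (fun y => g (true, y)) ν)
    (h0 : Integrable (fun y => g (false, y)) ν) : Integrable g ((bern p).prod ν) := by
  rw [bern_prod]
  exact (integrable_map_prodMk true h1 p).add_measure (integrable_map_prodMk false h0 (1 - p))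

lemma integral_bern_prod [SFinite ν] (hp0 : 0 ≤ p) (hp1 : p ≤ 1)
    (h1 : Integrable (fun y => g (true, y)) ν) (h0 : Integrable (fun y => g (false, y)) ν) :
    ∫ z, g z ∂(bern p).prod ν = p * ∫ y, g (true, y) ∂ν + (1 - p) * ∫ y, g (false, y) ∂ν := by
  rw [bern_prod, integral_add_measure (integrable_map_prodMk true h1 p)
      (integrable_map_prodMk false h0 (1 - p)),
    integral_smul_measure, integral_smul_measure,
    (measurableEmbedding_prodMk_left true).integral_map,
    (measurableEmbedding_prodMk_left false).integral_map,
    ENNReal.toReal_ofReal hp0, ENNReal.toReal_ofReal (sub_nonneg.2 hp1), smul_eq_mul, smul_eq_mul]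

end Bernoulli

section Occlusion

variable {X : Type*}

lemma eq_preimage_of_pairwise_disjoint {R : ℕ} {A : Fin R → Set X} {ρ : X → Fin R}
    (hdisj : Pairwise fun i j => Disjoint (A i) (A j)) (hρ : ∀ x, x ∈ A (ρ x)) (i : Fin R) :
    A i = ρ ⁻¹' {i} := by
  ext x
  refine ⟨fun hx => ?_, fun hx => hx ▸ hρ x⟩
  by_contra hne
  exact Set.disjoint_left.1 (hdisj hne) (hρ x) hx

lemma norm_focc (f : X → ℝ) (z : X × Bool × X) : ‖focc f z‖ = focc (fun x => ‖f x‖) z :=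
  apply_ite _ _ _ _

variable [MeasurableSpace X]

lemma measurable_focc {f : X → ℝ} (hf : Measurable f) : Measurable (focc f) :=
  Measurable.ite (measurableSet_eq_fun (by fun_prop) measurable_const) (by fun_prop) (by fun_prop)

section FiniteRange

variable {μ : Measure X} {R : ℕ} {ρ : X → Fin R}

lemma integrable_comp_mul (hρm : Measurable ρ) (c : Fin R → ℝ) {g : X → ℝ}
    (hg : Integrable g μ) : Integrable (fun x => c (ρ x) * g x) μ := by
  obtain ⟨C, hC⟩ := (Set.finite_range fun i => ‖c i‖).bddAbove
  exact hg.bdd_mul ((measurable_of_countable c).comp hρm).aestronglyMeasurable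
    (ae_of_all _ fun x => hC ⟨ρ x, rfl⟩)

lemma integrable_comp [IsFiniteMeasure μ] (hρm : Measurable ρ) (c : Fin R → ℝ) :
    Integrable (fun x => c (ρ x)) μ := by
  simpa using integrable_comp_mul hρm c (integrable_const (1 : ℝ))

lemma integral_eq_sum_setIntegral_fiber (hρm : Measurable ρ) {g : X → ℝ} (hg : Integrable g μ) :
    ∫ x, g x ∂μ = ∑ i, ∫ x in ρ ⁻¹' {i}, g x ∂μ := by
  rw [← integral_iUnion_fintype (fun i => hρm (measurableSet_singleton i))
      (fun i j hij => Set.disjoint_singleton.2 hij |>.preimage ρ) fun i => hg.integrableOn,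
    ← Set.preimage_iUnion, Set.iUnion_singleton_eq_range, Set.range_id', Set.preimage_univ,
    Measure.restrict_univ]

end FiniteRange

lemma measureReal_mul_integral_cond (μ : Measure X) [IsFiniteMeasure μ] (s : Set X) (f : X → ℝ) :
    μ.real s * ∫ x, f x ∂μ[|s] = ∫ x in s, f x ∂μ := by
  by_cases hs : μ s = 0
  · simp [Measure.restrict_eq_zero.2 hs, measureReal_def, hs]
  · rw [ProbabilityTheory.cond, integral_smul_measure, ENNReal.toReal_inv, smul_eq_mul,
      ← mul_assoc, measureReal_def,
      mul_inv_cancel₀ (ENNReal.toReal_ne_zero.2 ⟨hs, measure_ne_top μ s⟩), one_mul]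

lemma integrable_cond {μ : Measure X} {s : Set X} {f : X → ℝ} (hf : Integrable f μ)
    (hs : μ s ≠ 0) : Integrable f μ[|s] :=
  hf.restrict.smul_measure (ENNReal.inv_ne_top.2 hs)

section Partition

variable (P : Measure X) {R : ℕ} (A : Fin R → Set X) {ρ : X → Fin R}

section MarkKernel

variable (hρm : Measurable ρ) (α : Fin R → ℝ)

def markKernel : Kernel X (Bool × X) where
  toFun := mark P A ρ α
  measurable' := (measurable_of_countable fun i => (bern (α i)).prod (P[|A i])).comp hρm

lemma markKernel_apply (x : X) : markKernel P A hρm α x = mark P A ρ α x := rfl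

lemma isMarkovKernel_markKernel [IsFiniteMeasure P] (hpos : ∀ i, P (A i) ≠ 0)
    (hα0 : ∀ i, 0 ≤ α i) (hα1 : ∀ i, α i ≤ 1) : IsMarkovKernel (markKernel P A hρm α) where
  isProbabilityMeasure x :=
    have := isProbabilityMeasure_bern (hα0 (ρ x)) (hα1 (ρ x))
    have := cond_isProbabilityMeasure (μ := P) (hpos (ρ x))
    inferInstanceAs (IsProbabilityMeasure ((bern (α (ρ x))).prod (P[|A (ρ x)])))

variable [IsMarkovKernel (markKernel P A hρm α)]

lemma id_prod_markKernel_apply (x : X) :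
    (Kernel.id ×ₖ markKernel P A hρm α) x = (mark P A ρ α x).map fun sy => (x, sy.1, sy.2) := by
  rw [Kernel.prod_apply, Kernel.id_apply, Measure.dirac_prod]
  rfl

lemma Pocc_eq_comp : Pocc P A ρ α = (Kernel.id ×ₖ markKernel P A hρm α) ∘ₘ P := by
  simp_rw [Pocc, ← id_prod_markKernel_apply P A hρm α]

lemma Kocc_eq_comap_comp (K : Kernel X X) :
    Kocc P A ρ α (fun x => K x) =
      ⇑(((Kernel.id ×ₖ markKernel P A hρm α) ∘ₖ K).comap Prod.fst measurable_fst :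
        Kernel (X × Bool × X) _) := by
  ext1 z
  simp_rw [Kernel.comap_apply, Kernel.comp_apply, Kocc, ← id_prod_markKernel_apply P A hρm α]

theorem invariant_Pocc {K : Kernel X X} (hK : K.Invariant P) :
    Kernel.Invariant (((Kernel.id ×ₖ markKernel P A hρm α) ∘ₖ K).comap Prod.fst measurable_fst)
      (Pocc P A ρ α) := by
  rw [Pocc_eq_comp P A hρm α]
  exact hK.comap_comp_of_map_eq_id measurable_fst (by rw [← Kernel.fst_eq, Kernel.fst_prod])

end MarkKernel

variable [IsFiniteMeasure P] {α : Fin R → ℝ} {f : X → ℝ}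

lemma integral_comp_mul_regionMean (hρm : Measurable ρ) (hAρ : ∀ i, A i = ρ ⁻¹' {i})
    (c : Fin R → ℝ) (hf : Integrable f P) :
    ∫ x, c (ρ x) * regionMean P A f (ρ x) ∂P = ∫ x, c (ρ x) * f x ∂P := by
  rw [integral_eq_sum_setIntegral_fiber hρm (integrable_comp hρm fun i => c i * regionMean P A f i),
    integral_eq_sum_setIntegral_fiber hρm (integrable_comp_mul hρm c hf)]
  refine Finset.sum_congr rfl fun i _ => ?_
  have hfiber : MeasurableSet (ρ ⁻¹' {i}) := hρm (measurableSet_singleton i)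
  calc ∫ x in ρ ⁻¹' {i}, c (ρ x) * regionMean P A f (ρ x) ∂P
      = ∫ x in ρ ⁻¹' {i}, c i * regionMean P A f i ∂P :=
        setIntegral_congr_fun hfiber fun x (hx : ρ x = i) => by rw [hx]
    _ = c i * (P.real (A i) * regionMean P A f i) := by
        rw [setIntegral_const, hAρ, smul_eq_mul]; ring
    _ = ∫ x in ρ ⁻¹' {i}, c i * f x ∂P := by
        rw [regionMean, measureReal_mul_integral_cond, hAρ, integral_const_mul]
    _ = ∫ x in ρ ⁻¹' {i}, c (ρ x) * f x ∂P :=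
        setIntegral_congr_fun hfiber fun x (hx : ρ x = i) => by rw [hx]

lemma integral_mark_focc (hpos : ∀ i, P (A i) ≠ 0) (hα0 : ∀ i, 0 ≤ α i) (hα1 : ∀ i, α i ≤ 1)
    {g : X → ℝ} (hg : Integrable g P) (x : X) :
    ∫ sy, focc g (x, sy) ∂mark P A ρ α x =
      α (ρ x) * regionMean P A g (ρ x) + (1 - α (ρ x)) * g x := by
  have := cond_isProbabilityMeasure (μ := P) (hpos (ρ x))
  rw [mark, integral_bern_prod (hα0 _) (hα1 _) (integrable_cond hg (hpos _))
    (integrable_const (g x))]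
  simp [focc, regionMean]

lemma integrable_focc_Pocc (hρm : Measurable ρ) (hpos : ∀ i, P (A i) ≠ 0) (hα0 : ∀ i, 0 ≤ α i)
    (hα1 : ∀ i, α i ≤ 1) (hfm : Measurable f) (hf : Integrable f P) :
    Integrable (focc f) (Pocc P A ρ α) := by
  have := isMarkovKernel_markKernel P A hρm α hpos hα0 hα1
  rw [Pocc_eq_comp P A hρm α, ← Measure.compProd_eq_comp_prod,
    Measure.integrable_compProd_iff (measurable_focc hfm).aestronglyMeasurable]
  refine ⟨ae_of_all _ fun x => ?_, ?_⟩
  · have := cond_isProbabilityMeasure (μ := P) (hpos (ρ x))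
    exact integrable_bern_prod (integrable_cond hf (hpos _)) (integrable_const (f x))
  · simp_rw [norm_focc, markKernel_apply, integral_mark_focc P A hpos hα0 hα1 hf.norm]
    exact (integrable_comp hρm fun i => α i * regionMean P A (fun a => ‖f a‖) i).add
      (integrable_comp_mul hρm (fun i => 1 - α i) hf.norm)

lemma integral_focc_Pocc (hρm : Measurable ρ) (hAρ : ∀ i, A i = ρ ⁻¹' {i})
    (hpos : ∀ i, P (A i) ≠ 0) (hα0 : ∀ i, 0 ≤ α i) (hα1 : ∀ i, α i ≤ 1) (hfm : Measurable f)
    (hf : Integrable f P) :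
    ∫ z, focc f z ∂Pocc P A ρ α = ∫ x, f x ∂P := by
  have := isMarkovKernel_markKernel P A hρm α hpos hα0 hα1
  have hint := integrable_focc_Pocc P A hρm hpos hα0 hα1 hfm hf
  rw [Pocc_eq_comp P A hρm α, ← Measure.compProd_eq_comp_prod] at hint ⊢
  simp_rw [Measure.integral_compProd hint, markKernel_apply,
    integral_mark_focc P A hpos hα0 hα1 hf]
  rw [integral_add (integrable_comp hρm fun i => α i * regionMean P A f i)
      (integrable_comp_mul hρm (fun i => 1 - α i) hf),
    integral_comp_mul_regionMean P A hρm hAρ α hf, ← integral_add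
      (integrable_comp_mul hρm α hf) (integrable_comp_mul hρm (fun i => 1 - α i) hf)]
  simp_rw [← add_mul, add_sub_cancel, one_mul]

end Partition

end Occlusion

theorem occEst_unbiased_general
    {X : Type*} [MeasurableSpace X]
    (P : Measure X) [IsProbabilityMeasure P] {R : ℕ} (A : Fin R → Set X)
    (hdisj : Pairwise fun i j => Disjoint (A i) (A j))
    (hpos : ∀ i, 0 < P (A i))
    (ρ : X → Fin R) (hρm : Measurable ρ) (hρ : ∀ x, x ∈ A (ρ x))
    (α : Fin R → ℝ) (hα0 : ∀ i, 0 ≤ α i) (hα1 : ∀ i, α i ≤ 1)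
    (K : Kernel X X) [IsMarkovKernel K] (hK : K.Invariant P)
    (f : X → ℝ) (hfm : Measurable f) (hf : MemLp f 2 P)
    (n : ℕ) (hn : 0 < n) :
    ∫ zs, (n : ℝ)⁻¹ * ∑ t : Fin n, focc f (zs t)
        ∂(chainLawF (Pocc P A ρ α) (Kocc P A ρ α (fun x => K x)) n)
      = ∫ x, f x ∂P := by
  have hpos' : ∀ i, P (A i) ≠ 0 := fun i => (hpos i).ne'
  have hfP : Integrable f P := hf.integrable one_le_two
  have := isMarkovKernel_markKernel P A hρm α hpos' hα0 hα1
  rw [Kocc_eq_comap_comp P A hρm α K,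
    integral_chainLawF_average _ (invariant_Pocc P A hρm α hK)
      (integrable_focc_Pocc P A hρm hpos' hα0 hα1 hfm hfP) hn.ne',
    integral_focc_Pocc P A hρm (eq_preimage_of_pairwise_disjoint hdisj hρ) hpos' hα0 hα1 hfm hfP]

/-- The occluded estimator is unbiased: when the occlusion process is
started in stationarity, `E[μ̂_occ] = P(f)`. -/
theorem occEst_unbiased
    {X : Type*} [MeasurableSpace X]
    (P : Measure X) [IsProbabilityMeasure P] {R : ℕ} (A : Fin R → Set X)
    (hA : ∀ i, MeasurableSet (A i))
    (hdisj : Pairwise fun i j => Disjoint (A i) (A j))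
    (hcover : (⋃ i, A i) = Set.univ)
    (hpos : ∀ i, 0 < P (A i))
    (ρ : X → Fin R) (hρm : Measurable ρ) (hρ : ∀ x, x ∈ A (ρ x))
    (α : Fin R → ℝ) (hα0 : ∀ i, 0 ≤ α i) (hα1 : ∀ i, α i ≤ 1)
    (K : Kernel X X) [IsMarkovKernel K] (hK : K.Invariant P)
    (f : X → ℝ) (hfm : Measurable f) (hf : MemLp f 2 P)
    (n : ℕ) (hn : 0 < n) :
    ∫ zs, (n : ℝ)⁻¹ * ∑ t : Fin n, focc f (zs t)
        ∂(chainLawF (Pocc P A ρ α) (Kocc P A ρ α (fun x => K x)) n)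
      = ∫ x, f x ∂P :=
  occEst_unbiased_general P A hdisj hpos ρ hρm hρ α hα0 hα1 K hK f hfm hf n hn

end OcclusionPaper
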